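/- For any p ≥ 3, the quantity W_p := inf_{τ > 0} exp(τ/2^p)·Θ_p(τ) satisfies log₂ W_p < 2^{−p}·(p + log₂(3e)); consequently C_p := 1/(1 − log₂ W_p) satisfies C_p < 1/(1 − 2^{−p}(p + log₂(3e))). -/

import Mathlib

/-!
Since `|z| ≤ |z| ^ p`, the theta series `Θ_p(τ)` is dominated by the two-sided geometric series
`∑ r ^ |z| = (1 + r) / (1 - r)` with `r = exp (-τ)`, and this is `< 1 + 3 r` once `r < 1/3`.
Testing the infimum at `τ = log (3 * 2 ^ p)`, where `3 r = 2 ^ (-p)`, gives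
`log W_p ≤ τ 2 ^ (-p) + log Θ_p(τ) < 2 ^ (-p) (τ + 1)`, the first bound after dividing by `log 2`.
For the second, the right-hand side is `< 1` because `log₂ (3e) < 4` and, by Bernoulli's
inequality for `8 ^ (p / 3)`, `p + 4 < 2 ^ p` when `p ≥ 3`.
-/

open Real BigOperators

/-- `Θ_p(τ) = ∑_{z ∈ ℤ} exp(-τ |z|^p)`. -/
noncomputable def Theta (p τ : ℝ) : ℝ :=
  ∑' z : ℤ, Real.exp (-τ * |(z : ℝ)| ^ p)

/-- `W_p := inf_{τ > 0} exp(τ/2^p) Θ_p(τ)`. -/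
noncomputable def Wp (p : ℝ) : ℝ :=
  ⨅ τ : Set.Ioi (0 : ℝ), Real.exp ((τ : ℝ) / 2 ^ p) * Theta p τ

section

variable {p τ : ℝ}

lemma hasSum_pow_natAbs {r : ℝ} (h₀ : 0 ≤ r) (h₁ : r < 1) :
    HasSum (fun z : ℤ => r ^ z.natAbs) ((1 + r) / (1 - r)) := by
  have h := hasSum_geometric_of_lt_one h₀ h₁
  have hZ := HasSum.of_nat_of_neg (f := fun z : ℤ => r ^ z.natAbs) (by simpa using h)
    (by simpa using h)
  have hr : 1 - r ≠ 0 := sub_ne_zero.mpr h₁.ne'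
  rwa [show (1 - r)⁻¹ + (1 - r)⁻¹ - r ^ (0 : ℤ).natAbs = (1 + r) / (1 - r) by
    field_simp; ring] at hZ

lemma exp_neg_mul_abs_rpow_le (hτ : 0 ≤ τ) (hp : 1 ≤ p) (z : ℤ) :
    exp (-τ * |(z : ℝ)| ^ p) ≤ exp (-τ) ^ z.natAbs := by
  have habs : |(z : ℝ)| ≤ |(z : ℝ)| ^ p := by
    rcases eq_or_ne z 0 with rfl | hz
    · simp [rpow_nonneg]
    · exact self_le_rpow_of_one_le (by exact_mod_cast Int.one_le_abs hz) hp
  rw [← exp_nat_mul, Nat.cast_natAbs, Int.cast_abs]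
  exact exp_le_exp.mpr (by nlinarith)

lemma summable_exp_neg_mul_abs_rpow (hτ : 0 < τ) (hp : 1 ≤ p) :
    Summable fun z : ℤ => exp (-τ * |(z : ℝ)| ^ p) :=
  (hasSum_pow_natAbs (exp_pos _).le (exp_lt_one_iff.mpr (neg_neg_of_pos hτ))).summable
    |>.of_nonneg_of_le (fun _ => (exp_pos _).le) (exp_neg_mul_abs_rpow_le hτ.le hp)

lemma one_le_theta (hτ : 0 < τ) (hp : 1 ≤ p) : 1 ≤ Theta p τ := by
  have := (summable_exp_neg_mul_abs_rpow hτ hp).le_tsum 0 (fun _ _ => (exp_pos _).le)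
  simpa [Theta, zero_rpow (by linarith : p ≠ 0)] using this

lemma theta_le (hτ : 0 < τ) (hp : 1 ≤ p) :
    Theta p τ ≤ (1 + exp (-τ)) / (1 - exp (-τ)) :=
  hasSum_le (exp_neg_mul_abs_rpow_le hτ.le hp) (summable_exp_neg_mul_abs_rpow hτ hp).hasSum
    (hasSum_pow_natAbs (exp_pos _).le (exp_lt_one_iff.mpr (neg_neg_of_pos hτ)))

lemma theta_lt_one_add (hp : 1 ≤ p) (hτ : log 3 < τ) : Theta p τ < 1 + 3 * exp (-τ) := by
  have hτ₀ : 0 < τ := (log_pos (by norm_num)).trans hτ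
  have hr : exp (-τ) < 1 / 3 := by
    calc exp (-τ) < exp (-log 3) := exp_lt_exp.mpr (neg_lt_neg hτ)
      _ = 1 / 3 := by rw [exp_neg, exp_log (by norm_num), one_div]
  refine (theta_le hτ₀ hp).trans_lt ?_
  rw [div_lt_iff₀ (by linarith)]
  nlinarith [exp_pos (-τ)]

lemma one_le_wp (hp : 1 ≤ p) : 1 ≤ Wp p :=
  le_ciInf fun τ => one_le_mul_of_one_le_of_one_le
    (one_le_exp (div_nonneg τ.2.le (rpow_nonneg zero_le_two p))) (one_le_theta τ.2 hp)

lemma wp_le (hp : 1 ≤ p) (hτ : 0 < τ) : Wp p ≤ exp (τ / 2 ^ p) * Theta p τ :=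
  ciInf_le (f := fun τ : Set.Ioi (0 : ℝ) => exp ((τ : ℝ) / 2 ^ p) * Theta p τ)
    ⟨0, by rintro _ ⟨τ, rfl⟩; have := one_le_theta τ.2 hp; positivity⟩ ⟨τ, hτ⟩

lemma log_wp_lt (hp : 1 ≤ p) : log (Wp p) < 2 ^ (-p) * (p * log 2 + log 3 + 1) := by
  have hτ : log 3 < log 3 + p * log 2 := by have := log_pos one_lt_two; nlinarith
  have hτ₀ : 0 < log 3 + p * log 2 := (log_pos (by norm_num)).trans hτ
  have hx : 3 * exp (-(log 3 + p * log 2)) = 2 ^ (-p) := by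
    rw [rpow_def_of_pos two_pos, neg_add, exp_add, exp_neg (log 3), exp_log three_pos]
    ring_nf
  have hΘ := theta_lt_one_add hp hτ
  have hΘ₀ : 0 < Theta p (log 3 + p * log 2) := by linarith [one_le_theta hτ₀ hp]
  calc log (Wp p)
      ≤ log (exp ((log 3 + p * log 2) / 2 ^ p) * Theta p (log 3 + p * log 2)) :=
        log_le_log (by linarith [one_le_wp hp]) (wp_le hp hτ₀)
    _ = (log 3 + p * log 2) * 2 ^ (-p) + log (Theta p (log 3 + p * log 2)) := by
        rw [log_mul (exp_ne_zero _) hΘ₀.ne', log_exp, rpow_neg zero_le_two, div_eq_mul_inv]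
    _ < (log 3 + p * log 2) * 2 ^ (-p) + 2 ^ (-p) := by linarith [log_le_sub_one_of_pos hΘ₀]
    _ = 2 ^ (-p) * (p * log 2 + log 3 + 1) := by ring

lemma logb_wp_lt (hp : 1 ≤ p) : logb 2 (Wp p) < 2 ^ (-p) * (p + logb 2 (3 * exp 1)) := by
  rw [logb, div_lt_iff₀ (log_pos one_lt_two), logb, log_mul three_ne_zero (exp_ne_zero 1),
    log_exp]
  refine (log_wp_lt hp).trans_eq ?_
  field_simp
  ring

lemma logb_three_mul_exp_one_lt_four : logb 2 (3 * exp 1) < 4 := by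
  rw [logb_lt_iff_lt_rpow one_lt_two (by positivity), show (2 : ℝ) ^ (4 : ℝ) = 16 by norm_num]
  linarith [exp_one_lt_d9]

lemma add_four_lt_two_rpow (hp : 3 ≤ p) : p + 4 < 2 ^ p := by
  have h := one_add_mul_self_le_rpow_one_add (s := 7) (by norm_num) (p := p / 3) (by linarith)
  have h8 : (1 + 7 : ℝ) ^ (p / 3) = 2 ^ p := by
    rw [show (1 + 7 : ℝ) = 2 ^ (3 : ℝ) by norm_num, ← rpow_mul zero_le_two]
    ring_nf
  linarith

lemma two_rpow_neg_mul_lt_one (hp : 3 ≤ p) : 2 ^ (-p) * (p + logb 2 (3 * exp 1)) < 1 := by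
  rw [rpow_neg zero_le_two, inv_mul_lt_iff₀ (by positivity), mul_one]
  linarith [logb_three_mul_exp_one_lt_four, add_four_lt_two_rpow hp]

end

/-- For any `p ≥ 3`, `log₂ W_p < 2^{−p} (p + log₂(3e))`; consequently
`C_p := 1/(1 − log₂ W_p)` satisfies `C_p < 1/(1 − 2^{−p}(p + log₂(3e)))`. -/
theorem Cp_bound (p : ℝ) (hp : 3 ≤ p) :
    Real.logb 2 (Wp p) < 2 ^ (-p) * (p + Real.logb 2 (3 * Real.exp 1)) ∧
    1 / (1 - Real.logb 2 (Wp p)) <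
      1 / (1 - 2 ^ (-p) * (p + Real.logb 2 (3 * Real.exp 1))) := by
  have hW := logb_wp_lt (by linarith : 1 ≤ p)
  refine ⟨hW, one_div_lt_one_div_of_lt ?_ (by linarith)⟩
  linarith [two_rpow_neg_mul_lt_one hp]
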